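/- arXiv:1703.00688 — 3 statements merged into one kernel-verified Lean document; each statement's English description precedes it below -/
import Mathlib

section
/- Let S ⊆ ℝ³ be a nonempty convex set contained in the plane {p : n·p = a}, and let p_G ∈ ℝ³ with n·p_G > a. Let p_Z ∈ ℝ³ with n·(p_G − p_Z) > 0, and define p_C as the intersection of the line through p_G and p_Z with the plane {n·p = a}, i.e., p_C = p_G + t(p_Z − p_G) with t = (n·p_G − a)/(n·(p_G − p_Z)). Then p_C ∈ S if and only if p_Z ∈ p_G + cone(S − p_G), where cone(X) denotes the conical hull of X. -/
open Matrix

section Homothety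

variable {𝕜 E : Type*} [Field 𝕜] [AddCommGroup E] [Module 𝕜 E]

theorem eq_add_inv_smul_sub_of_eq_add_smul_sub {μ : 𝕜} (hμ : μ ≠ 0) {p q s : E}
    (h : q = p + μ • (s - p)) : s = p + μ⁻¹ • (q - p) := by
  simp [h, smul_smul, hμ]

theorem LinearMap.map_sub_of_eq_add_smul_sub (f : E →ₗ[𝕜] 𝕜) {μ : 𝕜} {p q s : E}
    (h : q = p + μ • (s - p)) : f (p - q) = μ * (f p - f s) := by
  simp only [h, map_sub, map_add, map_smul, smul_eq_mul]
  ring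

end Homothety

theorem cop_mem_iff_zmp_in_cone_general
    (n : Fin 3 → ℝ) (a : ℝ) (S : Set (Fin 3 → ℝ))
    (hSplane : ∀ p ∈ S, n ⬝ᵥ p = a)
    (pG pZ : Fin 3 → ℝ) (hG : a < n ⬝ᵥ pG) (hZ : 0 < n ⬝ᵥ (pG - pZ))
    (t : ℝ) (ht : t = (n ⬝ᵥ pG - a) / (n ⬝ᵥ (pG - pZ)))
    (pC : Fin 3 → ℝ) (hC : pC = pG + t • (pZ - pG)) :
    pC ∈ S ↔ ∃ μ : ℝ, 0 ≤ μ ∧ ∃ s ∈ S, pZ = pG + μ • (s - pG) := by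
  have hGa : 0 < n ⬝ᵥ pG - a := sub_pos.mpr hG
  have ht_pos : 0 < t := ht ▸ div_pos hGa hZ
  constructor
  · intro hpC
    exact ⟨t⁻¹, inv_nonneg.mpr ht_pos.le, pC, hpC,
      eq_add_inv_smul_sub_of_eq_add_smul_sub ht_pos.ne' hC⟩
  · rintro ⟨μ, -, s, hs, hpZ⟩
    have hdepth : n ⬝ᵥ (pG - pZ) = μ * (n ⬝ᵥ pG - a) := by
      simpa [hSplane s hs] using (dotProductBilin ℝ ℝ n).map_sub_of_eq_add_smul_sub hpZ
    have hμ_pos : 0 < μ := pos_of_mul_pos_left (hdepth ▸ hZ) hGa.le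
    have ht_inv : t = μ⁻¹ := by
      rw [ht, hdepth]
      field_simp
    rwa [hC, ht_inv, ← eq_add_inv_smul_sub_of_eq_add_smul_sub hμ_pos.ne' hpZ]

/-- Let `S ⊆ ℝ³` be a nonempty convex set contained in the plane `{p | n·p = a}`,
`p_G` strictly above the plane, and `p_Z` with `n·(p_G − p_Z) > 0`. Defining the COP
`p_C = p_G + t (p_Z − p_G)` with `t = (n·p_G − a)/(n·(p_G − p_Z))`, we have
`p_C ∈ S ↔ p_Z ∈ p_G + cone(S − p_G)`, where `cone(X) = {μ x : μ ≥ 0, x ∈ X}`. -/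
theorem cop_mem_iff_zmp_in_cone
    (n : Fin 3 → ℝ) (a : ℝ) (S : Set (Fin 3 → ℝ)) (hS : S.Nonempty)
    (hSconv : Convex ℝ S) (hSplane : ∀ p ∈ S, n ⬝ᵥ p = a)
    (pG pZ : Fin 3 → ℝ) (hG : a < n ⬝ᵥ pG) (hZ : 0 < n ⬝ᵥ (pG - pZ))
    (t : ℝ) (ht : t = (n ⬝ᵥ pG - a) / (n ⬝ᵥ (pG - pZ)))
    (pC : Fin 3 → ℝ) (hC : pC = pG + t • (pZ - pG)) :
    pC ∈ S ↔ ∃ μ : ℝ, 0 ≤ μ ∧ ∃ s ∈ S, pZ = pG + μ • (s - pG) :=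
  cop_mem_iff_zmp_in_cone_general n a S hSplane pG pZ hG hZ t ht pC hC
end

section
/- Let μ, X, Y, z_G > 0 and x_G, y_G ∈ ℝ. Suppose real numbers x_C, y_C satisfy |x_C| ≤ X, |y_C| ≤ Y, |x_G − x_C| ≤ μ z_G, and |y_G − y_C| ≤ μ z_G. Then all eight inequalities of the form 0 ≤ (X ± x_C)(μ z_G ∓ (y_C − y_G)) + (Y ± y_C)(μ z_G ± (x_C − x_G)) (for the sign patterns listed in the paper) hold. That is, the yaw-torque inequalities of the rectangular contact wrench cone are implied by the COP and friction inequalities in the pendulum mode. -/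
/-!
Every factor of the eight yaw-torque expressions has the form `r ± t` with `|t| ≤ r`:
`X ± x_C` and `Y ± y_C` by the COP bounds, `μ z_G ± (x_C − x_G)` and `μ z_G ± (y_C − y_G)`
by the friction bounds. Each expression is thus a sum of two products of nonnegative numbers.
-/

theorem add_nonneg_and_sub_nonneg_of_abs_le {α : Type*} [AddCommGroup α] [LinearOrder α]
    [IsOrderedAddMonoid α] {t r : α} (h : |t| ≤ r) : 0 ≤ r + t ∧ 0 ≤ r - t := by
  obtain ⟨hneg, hpos⟩ := abs_le.mp h
  exact ⟨neg_le_iff_add_nonneg'.mp hneg, sub_nonneg.mpr hpos⟩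

theorem yaw_torque_redundant_general (μ X Y zG xG yG xC yC : ℝ)
    (h1 : |xC| ≤ X) (h2 : |yC| ≤ Y)
    (h3 : |xG - xC| ≤ μ * zG) (h4 : |yG - yC| ≤ μ * zG) :
    0 ≤ (X + xC) * (μ * zG - (yC - yG)) + (Y + yC) * (μ * zG + (xC - xG)) ∧
    0 ≤ (X + xC) * (μ * zG + (yC - yG)) + (Y + yC) * (μ * zG - (xC - xG)) ∧
    0 ≤ (X - xC) * (μ * zG - (yC - yG)) + (Y + yC) * (μ * zG - (xC - xG)) ∧
    0 ≤ (X - xC) * (μ * zG + (yC - yG)) + (Y + yC) * (μ * zG + (xC - xG)) ∧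
    0 ≤ (X - xC) * (μ * zG + (yC - yG)) + (Y - yC) * (μ * zG - (xC - xG)) ∧
    0 ≤ (X + xC) * (μ * zG - (yC - yG)) + (Y - yC) * (μ * zG - (xC - xG)) ∧
    0 ≤ (X + xC) * (μ * zG + (yC - yG)) + (Y - yC) * (μ * zG + (xC - xG)) ∧
    0 ≤ (X - xC) * (μ * zG - (yC - yG)) + (Y - yC) * (μ * zG + (xC - xG)) := by
  obtain ⟨_, _⟩ := add_nonneg_and_sub_nonneg_of_abs_le h1
  obtain ⟨_, _⟩ := add_nonneg_and_sub_nonneg_of_abs_le h2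
  obtain ⟨_, _⟩ := add_nonneg_and_sub_nonneg_of_abs_le (abs_sub_comm xG xC ▸ h3)
  obtain ⟨_, _⟩ := add_nonneg_and_sub_nonneg_of_abs_le (abs_sub_comm yG yC ▸ h4)
  refine ⟨?_, ?_, ?_, ?_, ?_, ?_, ?_, ?_⟩ <;>
    exact add_nonneg (mul_nonneg ‹_› ‹_›) (mul_nonneg ‹_› ‹_›)

/-- The eight yaw-torque inequalities of the rectangular contact wrench cone are
implied by the COP inequalities `|x_C| ≤ X`, `|y_C| ≤ Y` and the friction
inequalities `|x_G − x_C| ≤ μ z_G`, `|y_G − y_C| ≤ μ z_G`. -/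
theorem yaw_torque_redundant (μ X Y zG xG yG xC yC : ℝ)
    (hμ : 0 < μ) (hX : 0 < X) (hY : 0 < Y) (hzG : 0 < zG)
    (h1 : |xC| ≤ X) (h2 : |yC| ≤ Y)
    (h3 : |xG - xC| ≤ μ * zG) (h4 : |yG - yC| ≤ μ * zG) :
    0 ≤ (X + xC) * (μ * zG - (yC - yG)) + (Y + yC) * (μ * zG + (xC - xG)) ∧
    0 ≤ (X + xC) * (μ * zG + (yC - yG)) + (Y + yC) * (μ * zG - (xC - xG)) ∧
    0 ≤ (X - xC) * (μ * zG - (yC - yG)) + (Y + yC) * (μ * zG - (xC - xG)) ∧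
    0 ≤ (X - xC) * (μ * zG + (yC - yG)) + (Y + yC) * (μ * zG + (xC - xG)) ∧
    0 ≤ (X - xC) * (μ * zG + (yC - yG)) + (Y - yC) * (μ * zG - (xC - xG)) ∧
    0 ≤ (X + xC) * (μ * zG - (yC - yG)) + (Y - yC) * (μ * zG - (xC - xG)) ∧
    0 ≤ (X + xC) * (μ * zG + (yC - yG)) + (Y - yC) * (μ * zG + (xC - xG)) ∧
    0 ≤ (X - xC) * (μ * zG - (yC - yG)) + (Y - yC) * (μ * zG + (xC - xG)) :=
  yaw_torque_redundant_general μ X Y zG xG yG xC yC h1 h2 h3 h4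
end

section
/- Consider the discrete linear system x[k+1] = A x[k] + B z[k] with A = [[cosh(ωΔT)·E, sinh(ωΔT)/ω·E], [ω·sinh(ωΔT)·E, cosh(ωΔT)·E]] and B = [((1 − cosh(ωΔT))·E)ᵀ, (−ω·sinh(ωΔT)·E)ᵀ]ᵀ, where E is the 3×3 identity. Then this exactly matches the time-ΔT flow of the continuous system ṗ = v, v̇ = ω²(p − z) + g applied to residuals: if (p, v) and (p^d, v^d) both solve the ODE with respective constant inputs z and z^d over [0, ΔT], then the residual Δx(ΔT) = (p − p^d, v − v^d)(ΔT) equals A·Δx(0) + B·Δz where Δz = z − z^d. In particular the gravity term cancels. -/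
/-!
Gravity cancels in the difference of the two equations, and measured from the shifted
equilibrium `z - zd` the residual solves the autonomous system `a' = b`, `b' = ω² a`,
whose time-`T` flow is the cosh/sinh matrix.
-/

open Real Set

section HyperbolicFlow

variable {E : Type*} [NormedAddCommGroup E] [NormedSpace ℝ E]

lemma eq_of_hasDerivAt_zero_on_Icc {T : ℝ} {f : ℝ → E} (hT : 0 ≤ T)
    (hf : ∀ t ∈ Icc 0 T, HasDerivAt f 0 t) : f T = f 0 :=
  constant_of_has_deriv_right_zero (fun t ht => (hf t ht).continuousAt.continuousWithinAt)
    (fun t ht => (hf t (Ico_subset_Icc_self ht)).hasDerivWithinAt) T (right_mem_Icc.2 hT)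

theorem hyperbolic_flow_of_hasDerivAt {ω T : ℝ} {a b : ℝ → E} (hω : ω ≠ 0) (hT : 0 ≤ T)
    (ha : ∀ t ∈ Icc 0 T, HasDerivAt a (b t) t)
    (hb : ∀ t ∈ Icc 0 T, HasDerivAt b (ω ^ 2 • a t) t) :
    a T = cosh (ω * T) • a 0 + (sinh (ω * T) / ω) • b 0 ∧
    b T = (ω * sinh (ω * T)) • a 0 + cosh (ω * T) • b 0 := by
  have hτ (t : ℝ) : HasDerivAt (fun t => ω * (T - t)) (-ω) t := by
    simpa using ((hasDerivAt_const t T).sub (hasDerivAt_id t)).const_mul ω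
  -- Transporting the state at time `t` forward by the flow over `[t, T]` gives a constant.
  have hpos : ∀ t ∈ Icc 0 T, HasDerivAt
      (fun t => cosh (ω * (T - t)) • a t + (sinh (ω * (T - t)) / ω) • b t) 0 t := by
    intro t ht
    refine (((hτ t).cosh.fun_smul (ha t ht)).fun_add
      (((hτ t).sinh.div_const ω).fun_smul (hb t ht))).congr_deriv ?_
    match_scalars <;> field_simp <;> ring
  have hvel : ∀ t ∈ Icc 0 T, HasDerivAt
      (fun t => (ω * sinh (ω * (T - t))) • a t + cosh (ω * (T - t)) • b t) 0 t :=
    fun t ht => ((((hτ t).sinh.const_mul ω).fun_smul (ha t ht)).fun_add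
      ((hτ t).cosh.fun_smul (hb t ht))).congr_deriv (by module)
  have e₁ := eq_of_hasDerivAt_zero_on_Icc hT hpos
  have e₂ := eq_of_hasDerivAt_zero_on_Icc hT hvel
  simp only [sub_self, sub_zero, mul_zero, cosh_zero, sinh_zero, zero_div, zero_smul,
    one_smul, add_zero, zero_add] at e₁ e₂
  exact ⟨e₁, e₂⟩

end HyperbolicFlow

/-- The discrete residual dynamics `Δx[k+1] = A Δx[k] + B Δz[k]` of the constrained
LQR exactly match the time-`ΔT` flow of the FIP `ṗ = v`, `v̇ = ω²(p − z) + g`: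
if `(p, v)` and `(p^d, v^d)` solve the ODE with respective constant inputs `z`,
`z^d` over `[0, ΔT]`, then the residual at `ΔT` is given blockwise by
`Δp(ΔT) = cosh(ωΔT) Δp(0) + (sinh(ωΔT)/ω) Δv(0) + (1 − cosh(ωΔT)) Δz` and
`Δv(ΔT) = ω sinh(ωΔT) Δp(0) + cosh(ωΔT) Δv(0) − ω sinh(ωΔT) Δz`;
in particular gravity cancels. -/
theorem residual_dynamics_linear (ω ΔT : ℝ) (hω : 0 < ω) (hΔT : 0 < ΔT)
    (g z zd : Fin 3 → ℝ) (p v pd vd : ℝ → Fin 3 → ℝ)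
    (hp : ∀ t ∈ Set.Icc (0 : ℝ) ΔT, HasDerivAt p (v t) t)
    (hv : ∀ t ∈ Set.Icc (0 : ℝ) ΔT, HasDerivAt v (ω ^ 2 • (p t - z) + g) t)
    (hpd : ∀ t ∈ Set.Icc (0 : ℝ) ΔT, HasDerivAt pd (vd t) t)
    (hvd : ∀ t ∈ Set.Icc (0 : ℝ) ΔT, HasDerivAt vd (ω ^ 2 • (pd t - zd) + g) t) :
    p ΔT - pd ΔT =
        Real.cosh (ω * ΔT) • (p 0 - pd 0) + (Real.sinh (ω * ΔT) / ω) • (v 0 - vd 0)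
          + (1 - Real.cosh (ω * ΔT)) • (z - zd) ∧
    v ΔT - vd ΔT =
        (ω * Real.sinh (ω * ΔT)) • (p 0 - pd 0) + Real.cosh (ω * ΔT) • (v 0 - vd 0)
          - (ω * Real.sinh (ω * ΔT)) • (z - zd) := by
  have hΔp : ∀ t ∈ Icc 0 ΔT,
      HasDerivAt (fun t => p t - pd t - (z - zd)) (v t - vd t) t := fun t ht =>
    ((hp t ht).sub (hpd t ht)).sub_const _
  have hΔv : ∀ t ∈ Icc 0 ΔT,
      HasDerivAt (fun t => v t - vd t) (ω ^ 2 • (p t - pd t - (z - zd))) t := fun t ht =>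
    ((hv t ht).fun_sub (hvd t ht)).congr_deriv (by module)
  obtain ⟨hpos, hvel⟩ := hyperbolic_flow_of_hasDerivAt hω.ne' hΔT.le hΔp hΔv
  constructor
  · rw [sub_eq_iff_eq_add.mp hpos]
    module
  · rw [hvel]
    module
end
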